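/- For an oriented graph G^σ of a graph G with n vertices and maximum degree Δ, the skew energy satisfies E_S(G^σ) ≤ n√Δ, and equality holds if and only if S(G^σ)^T S(G^σ) = Δ I_n. -/

import Mathlib

open Matrix Polynomial

/-- The skew energy: the sum of the norms of the eigenvalues (with multiplicity). -/
noncomputable def skewEnergy {V : Type*} [Fintype V] [DecidableEq V]
    (S : Matrix V V ℝ) : ℝ :=
  (((S.map Complex.ofReal).charpoly.roots).map (fun z => ‖z‖)).sum

/-!
Since `S` is real skew-symmetric, `i • S` is Hermitian with real eigenvalues `μ k`, and the
eigenvalues of `S` are the `-i * μ k`; hence `E_S(S) = ∑ |μ k|`. Moreover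
`∑ μ k ^ 2 = tr ((i • S) ^ 2) = tr (Sᵀ S) = ∑ deg ≤ n Δ`, so Cauchy–Schwarz gives
`∑ |μ k| ≤ n √Δ`, with equality iff every `μ k ^ 2 = Δ`, which by the spectral theorem says
`(i • S) ^ 2 = Sᵀ S = Δ • 1`.
-/

open Unitary

theorem Matrix.trace_transpose_mul_self {m n R : Type*} [Fintype m] [Fintype n] [CommSemiring R]
    (S : Matrix m n R) : (Sᵀ * S).trace = ∑ i, ∑ j, S i j ^ 2 := by
  simp only [trace, diag, mul_apply, transpose_apply, sq]
  exact Finset.sum_comm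

namespace SimpleGraph

variable {V : Type*} [Fintype V] (G : SimpleGraph V) [DecidableRel G.Adj] {S : Matrix V V ℝ}

theorem sum_sq_eq_degree (hadj : ∀ i j, G.Adj i j → S i j = 1 ∨ S i j = -1)
    (hnadj : ∀ i j, ¬ G.Adj i j → S i j = 0) (i : V) :
    ∑ j, S i j ^ 2 = G.degree i := by
  have hsq : ∀ j, S i j ^ 2 = if G.Adj i j then 1 else 0 := fun j => by
    by_cases h : G.Adj i j
    · rcases hadj i j h with h1 | h1 <;> simp [h1, h]
    · simp [hnadj i j h, h]
  simp [hsq, Finset.sum_boole, ← neighborFinset_eq_filter]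

theorem trace_transpose_mul_self_le (hadj : ∀ i j, G.Adj i j → S i j = 1 ∨ S i j = -1)
    (hnadj : ∀ i j, ¬ G.Adj i j → S i j = 0) :
    (Sᵀ * S).trace ≤ Fintype.card V * G.maxDegree := by
  rw [trace_transpose_mul_self]
  simp only [G.sum_sq_eq_degree hadj hnadj]
  exact_mod_cast Finset.sum_le_card_nsmul _ _ _ fun i _ => G.degree_le_maxDegree i

end SimpleGraph

section SumAbs

variable {ι : Type*} [Fintype ι] (x : ι → ℝ) {c : ℝ}

theorem sum_abs_le_card_mul_sqrt (h : ∑ i, x i ^ 2 ≤ Fintype.card ι * c) :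
    ∑ i, |x i| ≤ Fintype.card ι * √c := by
  have hcs : (∑ i, |x i|) ^ 2 ≤ (Fintype.card ι * √c) ^ 2 := by
    rcases isEmpty_or_nonempty ι with _ | _
    · simp
    have hc : 0 ≤ c := by
      have : 0 ≤ ∑ i, x i ^ 2 := by positivity
      have : (0 : ℝ) < Fintype.card ι := by exact_mod_cast Fintype.card_pos
      nlinarith
    calc (∑ i, |x i|) ^ 2 ≤ Fintype.card ι * ∑ i, |x i| ^ 2 := by
          simpa using sq_sum_le_card_mul_sum_sq (s := Finset.univ) (f := fun i => |x i|)
      _ ≤ Fintype.card ι * (Fintype.card ι * c) := by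
          simp only [sq_abs]; gcongr
      _ = (Fintype.card ι * √c) ^ 2 := by rw [mul_pow, Real.sq_sqrt hc]; ring
  exact (pow_le_pow_iff_left₀ (by positivity) (by positivity) two_ne_zero).1 hcs

theorem sum_sq_abs_sub_sqrt (hc : 0 ≤ c) :
    ∑ i, (|x i| - √c) ^ 2 = ∑ i, x i ^ 2 - 2 * √c * ∑ i, |x i| + Fintype.card ι * c := by
  calc ∑ i, (|x i| - √c) ^ 2 = ∑ i, (x i ^ 2 - 2 * √c * |x i| + c) := by
        refine Finset.sum_congr rfl fun i _ => ?_
        rw [sub_sq, sq_abs, Real.sq_sqrt hc]; ring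
    _ = _ := by simp [Finset.sum_add_distrib, Finset.sum_sub_distrib, Finset.mul_sum]

theorem sum_abs_eq_card_mul_sqrt_iff (hc : 0 ≤ c) (h : ∑ i, x i ^ 2 ≤ Fintype.card ι * c) :
    ∑ i, |x i| = Fintype.card ι * √c ↔ ∀ i, x i ^ 2 = c := by
  constructor
  · intro heq i
    have hzero : ∑ i, (|x i| - √c) ^ 2 = 0 := by
      refine le_antisymm ?_ (by positivity)
      rw [sum_sq_abs_sub_sqrt x hc, heq]
      nlinarith [Real.mul_self_sqrt hc]
    have hi : |x i| = √c := by
      have := (Finset.sum_eq_zero_iff_of_nonneg (fun j _ => sq_nonneg (|x j| - √c))).1 hzero i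
        (Finset.mem_univ i)
      nlinarith [sq_eq_zero_iff.1 this]
    rw [← sq_abs, hi, Real.sq_sqrt hc]
  · intro hx
    have hi : ∀ i, |x i| = √c := fun i => by rw [← hx i, Real.sqrt_sq_eq_abs]
    simp [hi]

end SumAbs

namespace Matrix

variable {𝕜 : Type*} [RCLike 𝕜] {n : Type*} [Fintype n] [DecidableEq n]

theorem charpoly_conjStarAlgAut (u : unitary (Matrix n n 𝕜)) (M : Matrix n n 𝕜) :
    (conjStarAlgAut 𝕜 _ u M).charpoly = M.charpoly := by
  rw [conjStarAlgAut_apply, charpoly_mul_comm, ← mul_assoc]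
  simp

theorem trace_conjStarAlgAut (u : unitary (Matrix n n 𝕜)) (M : Matrix n n 𝕜) :
    (conjStarAlgAut 𝕜 _ u M).trace = M.trace := by
  rw [conjStarAlgAut_apply, trace_mul_comm, ← mul_assoc]
  simp

namespace IsHermitian

variable {A : Matrix n n 𝕜} (hA : A.IsHermitian)

theorem smul_eq_conjStarAlgAut (c : 𝕜) :
    c • A = conjStarAlgAut 𝕜 _ hA.eigenvectorUnitary
      (diagonal fun i => c * hA.eigenvalues i) := by
  conv_lhs => rw [hA.spectral_theorem]
  rw [← map_smul, ← diagonal_smul]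
  rfl

theorem mul_self_eq_conjStarAlgAut :
    A * A = conjStarAlgAut 𝕜 _ hA.eigenvectorUnitary
      (diagonal fun i => ((hA.eigenvalues i ^ 2 : ℝ) : 𝕜)) := by
  conv_lhs => rw [hA.spectral_theorem]
  rw [← map_mul, diagonal_mul_diagonal]
  congr 2
  funext i
  rw [RCLike.ofReal_pow, sq]
  rfl

theorem roots_charpoly_smul (c : 𝕜) :
    (c • A).charpoly.roots = Finset.univ.val.map fun i => c * hA.eigenvalues i := by
  conv_rhs => rw [← roots_multiset_prod_X_sub_C (Finset.univ.val.map _), Multiset.map_map]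
  rw [hA.smul_eq_conjStarAlgAut, charpoly_conjStarAlgAut, charpoly_diagonal,
    Finset.prod_eq_multiset_prod]
  rfl

theorem trace_mul_self : (A * A).trace = ∑ i, ((hA.eigenvalues i ^ 2 : ℝ) : 𝕜) := by
  rw [hA.mul_self_eq_conjStarAlgAut, trace_conjStarAlgAut, trace_diagonal]

theorem mul_self_eq_smul_one_iff (c : ℝ) :
    A * A = (c : 𝕜) • 1 ↔ ∀ i, hA.eigenvalues i ^ 2 = c := by
  have hc : (c : 𝕜) • (1 : Matrix n n 𝕜) =
      conjStarAlgAut 𝕜 _ hA.eigenvectorUnitary (diagonal fun _ => (c : 𝕜)) := by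
    rw [← smul_one_eq_diagonal, map_smul, map_one]
  rw [hA.mul_self_eq_conjStarAlgAut, hc, EmbeddingLike.apply_eq_iff_eq,
    diagonal_eq_diagonal_iff]
  simp only [RCLike.ofReal_inj]

end IsHermitian

end Matrix

section SkewSymmetric

variable {n : Type*} {S : Matrix n n ℝ}

theorem isHermitian_I_smul_map_ofReal (hS : Sᵀ = -S) :
    (Complex.I • S.map Complex.ofReal).IsHermitian := by
  ext i j
  have hji : S j i = -S i j := congrFun (congrFun hS i) j
  simp [hji]

variable [Fintype n] [DecidableEq n]

theorem skewEnergy_eq_sum_abs_eigenvalues (hS : Sᵀ = -S) :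
    skewEnergy S = ∑ i, |(isHermitian_I_smul_map_ofReal hS).eigenvalues i| := by
  have hA : S.map Complex.ofReal = (-Complex.I) • Complex.I • S.map Complex.ofReal := by
    rw [smul_smul, neg_mul, Complex.I_mul_I, neg_neg, one_smul]
  have hroots := (isHermitian_I_smul_map_ofReal hS).roots_charpoly_smul (-Complex.I)
  rw [← hA] at hroots
  rw [skewEnergy, hroots, Multiset.map_map, Finset.sum_map_val]
  simp

theorem I_smul_map_ofReal_mul_self (hS : Sᵀ = -S) :
    Complex.I • S.map Complex.ofReal * Complex.I • S.map Complex.ofReal =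
      (Sᵀ * S).map Complex.ofReal := by
  rw [smul_mul_smul, Complex.I_mul_I, hS]
  ext i j
  simp [Matrix.mul_apply]

theorem sum_sq_eigenvalues_I_smul_map_ofReal (hS : Sᵀ = -S) :
    ∑ i, (isHermitian_I_smul_map_ofReal hS).eigenvalues i ^ 2 = (Sᵀ * S).trace := by
  have := (isHermitian_I_smul_map_ofReal hS).trace_mul_self
  rw [I_smul_map_ofReal_mul_self hS] at this
  simp only [trace, diag, map_apply] at this ⊢
  apply Complex.ofReal_injective
  simpa using this.symm

theorem transpose_mul_self_eq_smul_one_iff (hS : Sᵀ = -S) (c : ℝ) :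
    Sᵀ * S = c • 1 ↔ ∀ i, (isHermitian_I_smul_map_ofReal hS).eigenvalues i ^ 2 = c := by
  have hc : ((c : ℂ) • 1 : Matrix n n ℂ) = (c • 1 : Matrix n n ℝ).map Complex.ofReal := by
    ext i j
    by_cases h : i = j <;> simp [one_apply, h]
  rw [← (Matrix.map_injective Complex.ofReal_injective).eq_iff, ← I_smul_map_ofReal_mul_self hS,
    ← hc]
  exact (isHermitian_I_smul_map_ofReal hS).mul_self_eq_smul_one_iff c

end SkewSymmetric

/-- For an oriented graph `G^σ` of a graph `G` with `n` vertices and maximum degree `Δ`,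
the skew energy satisfies `E_S(G^σ) ≤ n√Δ`, with equality iff `S(G^σ)ᵀ S(G^σ) = Δ I`. -/
theorem skewEnergy_le_optimum {n : ℕ} (G : SimpleGraph (Fin n)) [DecidableRel G.Adj]
    (S : Matrix (Fin n) (Fin n) ℝ) (hskew : Sᵀ = -S)
    (hadj : ∀ i j, G.Adj i j → S i j = 1 ∨ S i j = -1)
    (hnadj : ∀ i j, ¬ G.Adj i j → S i j = 0) :
    skewEnergy S ≤ (n : ℝ) * Real.sqrt (G.maxDegree) ∧
    (skewEnergy S = (n : ℝ) * Real.sqrt (G.maxDegree) ↔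
      Sᵀ * S = (G.maxDegree : ℝ) • (1 : Matrix (Fin n) (Fin n) ℝ)) := by
  set μ := (isHermitian_I_smul_map_ofReal hskew).eigenvalues
  have hsum_sq : ∑ i, μ i ^ 2 ≤ Fintype.card (Fin n) * (G.maxDegree : ℝ) := by
    rw [sum_sq_eigenvalues_I_smul_map_ofReal hskew]
    exact G.trace_transpose_mul_self_le hadj hnadj
  have hbound := sum_abs_le_card_mul_sqrt μ hsum_sq
  have heq := sum_abs_eq_card_mul_sqrt_iff μ (Nat.cast_nonneg _) hsum_sq
  rw [Fintype.card_fin] at hbound heq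
  rw [skewEnergy_eq_sum_abs_eigenvalues hskew, transpose_mul_self_eq_smul_one_iff hskew]
  exact ⟨hbound, heq⟩
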